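/- Truth Lemma: Let Γ be a maximal SKHM-consistent set of L_Khm formulas and M^c_Γ its canonical model. For every formula φ of L_Khm and every state w ∈ S^c: M^c_Γ, w ⊨ φ if and only if φ ∈ L(w). -/
import Mathlib


/-- Formulas of the language L_Khm over a countable set of proposition
letters (represented by `ℕ`): `φ ::= p | ¬φ | (φ∧φ) | Khm(φ,φ,φ)`. -/
inductive Formula : Type
  | atom : ℕ → Formula
  | neg : Formula → Formula
  | and : Formula → Formula → Formula
  | khm : Formula → Formula → Formula → Formula
deriving DecidableEq

namespace Formula

/-- The falsum `⊥`, as a standard abbreviation. -/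
def falsum : Formula := and (atom 0) (neg (atom 0))

/-- The verum `⊤`. -/
def top : Formula := neg falsum

/-- Material implication, as a standard abbreviation. -/
def imp (φ ψ : Formula) : Formula := neg (and φ (neg ψ))

/-- Biimplication. -/
def biimp (φ ψ : Formula) : Formula := and (imp φ ψ) (imp ψ φ)

/-- The universal modality `Uφ := Khm(¬φ, ⊤, ⊥)`. -/
def U (φ : Formula) : Formula := khm (neg φ) top falsum

/-- Uniform substitution of formulas for proposition letters. -/
def subst (f : ℕ → Formula) : Formula → Formula
  | atom n => f n
  | neg φ => neg (subst f φ)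
  | and φ ψ => and (subst f φ) (subst f ψ)
  | khm φ χ ψ => khm (subst f φ) (subst f χ) (subst f ψ)

end Formula

/-- A model (ability map): a labelled transition system over action symbols `Act`,
with a set of states `S`, transitions `R`, and valuation `V`. -/
structure Model (Act : Type) where
  S : Type
  R : Act → S → S → Prop
  V : S → Set ℕ

namespace Model

variable {Act : Type} (M : Model Act)

/-- `M.bigStep σ s t` : `s →σ t`, i.e. `t` is reachable from `s` by executing the
sequence of actions `σ`. -/
def bigStep : List Act → M.S → M.S → Prop
  | [], s, t => s = t
  | a :: σ, s, t => ∃ u, M.R a s u ∧ bigStep σ u t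

/-- `σ = a₁⋯aₙ` is strongly executable at `s` if for each `0 ≤ k < n`,
`s →σ_k t` implies `t` has at least one `a_{k+1}`-successor. -/
def stronglyExec (σ : List Act) (s : M.S) : Prop :=
  ∀ k (h : k < σ.length) (t : M.S),
    M.bigStep (σ.take k) s t → ∃ u, M.R (σ.get ⟨k, h⟩) t u

/-- Satisfaction. `M.sat (Formula.khm ψ χ φ) s` holds iff there is `σ ∈ Act*`
such that for every `s'` with `M, s' ⊨ ψ`: `σ` is strongly `χ`-executable at `s'`
(strongly executable, and all strictly intermediate states satisfy `χ`) and
`M, t ⊨ φ` for all `t` with `s' →σ t`. -/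
def sat : Formula → M.S → Prop
  | .atom n, s => n ∈ M.V s
  | .neg φ, s => ¬ sat φ s
  | .and φ ψ, s => sat φ s ∧ sat ψ s
  | .khm ψ χ φ, s => ∃ σ : List Act, ∀ s', sat ψ s' →
      (M.stronglyExec σ s' ∧
        ∀ k, 0 < k → k < σ.length → ∀ t, M.bigStep (σ.take k) s' t → sat χ t) ∧
      (∀ t, M.bigStep σ s' t → sat φ t)

end Model

/-- A formula is valid (w.r.t. the class of all models over action symbols `Act`)
if it is satisfied at every state of every model. -/
def Valid (Act : Type) (φ : Formula) : Prop :=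
  ∀ M : Model Act, Nonempty M.S → ∀ s : M.S, M.sat φ s

/-- Boolean evaluation treating proposition letters and `Khm`-formulas as atoms. -/
def evalB (v : Formula → Bool) : Formula → Bool
  | .atom n => v (.atom n)
  | .neg φ => ! evalB v φ
  | .and φ ψ => evalB v φ && evalB v ψ
  | .khm ψ χ φ => v (.khm ψ χ φ)

/-- Propositional tautologies. -/
def Tautology (φ : Formula) : Prop := ∀ v, evalB v φ = true

open Formula in
/-- Derivability in the proof system SKHM. -/
inductive Deriv : Formula → Prop
  | taut {φ} : Tautology φ → Deriv φ
  | distU (p q) : Deriv (((U p).and (U (p.imp q))).imp (U q))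
  | tU (p) : Deriv ((U p).imp p)
  | fourKhmU (p o q) : Deriv ((khm p o q).imp (U (khm p o q)))
  | fiveKhmU (p o q) : Deriv ((neg (khm p o q)).imp (U (neg (khm p o q))))
  | empKhm (p q) : Deriv ((U (p.imp q)).imp (khm p falsum q))
  | compKhm (p o r q) :
      Deriv ((((khm p o r).and (khm r o q)).and (U (r.imp o))).imp (khm p o q))
  | oneKhm (p o q) :
      Deriv (((khm p o q).and (neg (khm p falsum q))).imp (khm p falsum o))
  | uKhm (p' p o o' q q') :
      Deriv (((((U (p'.imp p)).and (U (o.imp o'))).and (U (q.imp q'))).and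
        (khm p o q)).imp (khm p' o' q'))
  | mp {φ ψ} : Deriv (φ.imp ψ) → Deriv φ → Deriv ψ
  | necU {φ} : Deriv φ → Deriv (U φ)
  | sub {φ} (f : ℕ → Formula) : Deriv φ → Deriv (φ.subst f)

/-- Conjunction of a finite list of formulas. -/
def conjList : List Formula → Formula
  | [] => Formula.top
  | φ :: L => φ.and (conjList L)

/-- A set of formulas is SKHM-consistent if no finite conjunction of its
members has its negation derivable in SKHM. -/
def ConsistentSet (Γ : Set Formula) : Prop :=
  ∀ L : List Formula, (∀ φ ∈ L, φ ∈ Γ) → ¬ Deriv (Formula.neg (conjList L))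

/-- Maximal SKHM-consistent set. -/
def MCS (Γ : Set Formula) : Prop :=
  ConsistentSet Γ ∧ ∀ Δ, ConsistentSet Δ → Γ ⊆ Δ → Δ = Γ

/-- `Δ|Khm`: the positive `Khm`-formulas of `Δ`. -/
def khmPart (Δ : Set Formula) : Set Formula :=
  {θ ∈ Δ | ∃ ψ χ φ, θ = Formula.khm ψ χ φ}

/-- `Φ_Γ`: the set of all MCSs `Δ` with `Δ|Khm = Γ|Khm`. -/
def PhiGamma (Γ : Set Formula) : Set (Set Formula) :=
  {Δ | MCS Δ ∧ khmPart Δ = khmPart Γ}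

/-- Canonical action symbols: `⟨ψ,⊥,φ⟩` (`one ψ φ`) and `⟨χ^ψ,φ⟩` (`two χ ψ φ`). -/
inductive CanAct : Type
  | one : Formula → Formula → CanAct
  | two : Formula → Formula → Formula → CanAct
deriving DecidableEq

/-- The formula in the last component of a canonical action. -/
def CanAct.post : CanAct → Formula
  | .one _ φ => φ
  | .two _ _ φ => φ

/-- The canonical action set
`Σ_Γ = {⟨ψ,⊥,φ⟩ : Khm(ψ,⊥,φ) ∈ Γ} ∪ {⟨χ^ψ,φ⟩ : Khm(ψ,χ,φ) ∈ Γ, ¬Khm(ψ,⊥,φ) ∈ Γ}`. -/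
def SigmaGamma (Γ : Set Formula) : Set CanAct :=
  {a | (∃ ψ φ, a = CanAct.one ψ φ ∧ Formula.khm ψ Formula.falsum φ ∈ Γ) ∨
       (∃ χ ψ φ, a = CanAct.two χ ψ φ ∧ Formula.khm ψ χ φ ∈ Γ ∧
          Formula.neg (Formula.khm ψ Formula.falsum φ) ∈ Γ)}

/-- Canonical states: pairs `(Δ, χ^ψ)` (the marker `χ^ψ` is the pair `(χ, ψ)`)
with `χ ∈ Δ ∈ Φ_Γ`, and either `⟨χ^ψ,φ⟩ ∈ Σ_Γ` for some `φ`, or `⟨ψ,⊥,χ⟩ ∈ Σ_Γ`. -/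
def CanStates (Γ : Set Formula) : Set (Set Formula × Formula × Formula) :=
  {w | w.1 ∈ PhiGamma Γ ∧ w.2.1 ∈ w.1 ∧
       ((∃ φ, CanAct.two w.2.1 w.2.2 φ ∈ SigmaGamma Γ) ∨
        CanAct.one w.2.2 w.2.1 ∈ SigmaGamma Γ)}

/-- The canonical model `M^c_Γ` over the action set `Σ_Γ`. For a canonical state
`w`, `L(w) = w.1.1` and `R(w) = w.1.2`. -/
def canonicalModel (Γ : Set Formula) : Model {a : CanAct // a ∈ SigmaGamma Γ} where
  S := {w : Set Formula × Formula × Formula // w ∈ CanStates Γ}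
  R a w w' :=
    match a.1 with
    | CanAct.one ψ φ => ψ ∈ w.1.1 ∧ w'.1.2 = (φ, ψ)
    | CanAct.two χ ψ φ => w.1.2 = (χ, ψ) ∧ φ ∈ w'.1.1
  V w := {n | Formula.atom n ∈ w.1.1}

open Formula

namespace TL

/-! ### Propositional combinators -/

lemma d_mp2 {X A B : Formula} (h1 : Deriv (X.imp (A.imp B))) (h2 : Deriv (X.imp A)) :
    Deriv (X.imp B) := by
  have t : Tautology ((X.imp (A.imp B)).imp ((X.imp A).imp (X.imp B))) := by
    intro v; simp only [Formula.imp, evalB]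
    cases evalB v X <;> cases evalB v A <;> cases evalB v B <;> rfl
  exact Deriv.mp (Deriv.mp (Deriv.taut t) h1) h2

lemma d_id (A : Formula) : Deriv (A.imp A) := by
  refine Deriv.taut ?_
  intro v; simp only [Formula.imp, evalB]; cases evalB v A <;> rfl

lemma d_k {A B : Formula} (h : Deriv B) : Deriv (A.imp B) := by
  have t : Tautology (B.imp (A.imp B)) := by
    intro v; simp only [Formula.imp, evalB]
    cases evalB v A <;> cases evalB v B <;> rfl
  exact Deriv.mp (Deriv.taut t) h

lemma d_trans {A B C : Formula} (h1 : Deriv (A.imp B)) (h2 : Deriv (B.imp C)) :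
    Deriv (A.imp C) := by
  have t : Tautology ((A.imp B).imp ((B.imp C).imp (A.imp C))) := by
    intro v; simp only [Formula.imp, evalB]
    cases evalB v A <;> cases evalB v B <;> cases evalB v C <;> rfl
  exact Deriv.mp (Deriv.mp (Deriv.taut t) h1) h2

lemma d_and_intro {X A B : Formula} (h1 : Deriv (X.imp A)) (h2 : Deriv (X.imp B)) :
    Deriv (X.imp (A.and B)) := by
  have t : Tautology ((X.imp A).imp ((X.imp B).imp (X.imp (A.and B)))) := by
    intro v; simp only [Formula.imp, evalB]
    cases evalB v X <;> cases evalB v A <;> cases evalB v B <;> rfl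
  exact Deriv.mp (Deriv.mp (Deriv.taut t) h1) h2

lemma d_and_left (A B : Formula) : Deriv ((A.and B).imp A) := by
  refine Deriv.taut ?_
  intro v; simp only [Formula.imp, evalB]
  cases evalB v A <;> cases evalB v B <;> rfl

lemma d_and_right (A B : Formula) : Deriv ((A.and B).imp B) := by
  refine Deriv.taut ?_
  intro v; simp only [Formula.imp, evalB]
  cases evalB v A <;> cases evalB v B <;> rfl

lemma d_top : Deriv Formula.top := by
  refine Deriv.taut ?_
  intro v; simp only [Formula.top, Formula.falsum, evalB]
  cases v (atom 0) <;> rfl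

lemma d_curry {X A B : Formula} (h : Deriv ((X.and A).imp B)) : Deriv (X.imp (A.imp B)) := by
  have t : Tautology (((X.and A).imp B).imp (X.imp (A.imp B))) := by
    intro v; simp only [Formula.imp, evalB]
    cases evalB v X <;> cases evalB v A <;> cases evalB v B <;> rfl
  exact Deriv.mp (Deriv.taut t) h

lemma d_uncurry {X A B : Formula} (h : Deriv (X.imp (A.imp B))) : Deriv ((X.and A).imp B) := by
  have t : Tautology ((X.imp (A.imp B)).imp ((X.and A).imp B)) := by
    intro v; simp only [Formula.imp, evalB]
    cases evalB v X <;> cases evalB v A <;> cases evalB v B <;> rfl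
  exact Deriv.mp (Deriv.taut t) h

lemma d_neg_of_imp_falsum {A : Formula} (h : Deriv (A.imp falsum)) : Deriv A.neg := by
  have t : Tautology ((A.imp falsum).imp A.neg) := by
    intro v; simp only [Formula.imp, Formula.falsum, evalB]
    cases evalB v A <;> cases v (atom 0) <;> rfl
  exact Deriv.mp (Deriv.taut t) h

lemma d_imp_falsum_of_neg {A : Formula} (h : Deriv A.neg) : Deriv (A.imp falsum) := by
  have t : Tautology (A.neg.imp (A.imp falsum)) := by
    intro v; simp only [Formula.imp, Formula.falsum, evalB]
    cases evalB v A <;> cases v (atom 0) <;> rfl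
  exact Deriv.mp (Deriv.taut t) h

lemma d_neg_imp {A B : Formula} : Deriv (A.neg.imp (A.imp B)) := by
  refine Deriv.taut ?_
  intro v; simp only [Formula.imp, evalB]
  cases evalB v A <;> cases evalB v B <;> rfl

lemma d_dne {A : Formula} : Deriv (A.neg.neg.imp A) := by
  refine Deriv.taut ?_
  intro v; simp only [Formula.imp, evalB]
  cases evalB v A <;> rfl

lemma d_dni {A : Formula} : Deriv (A.imp A.neg.neg) := by
  refine Deriv.taut ?_
  intro v; simp only [Formula.imp, evalB]
  cases evalB v A <;> rfl

lemma d_falsum_imp (A : Formula) : Deriv (falsum.imp A) := by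
  refine Deriv.taut ?_
  intro v; simp only [Formula.imp, Formula.falsum, evalB]
  cases v (atom 0) <;> cases evalB v A <;> rfl

lemma d_imp_top (A : Formula) : Deriv (A.imp Formula.top) := d_k d_top

/-! ### conjList lemmas -/

lemma conj_mem {L : List Formula} {A : Formula} (h : A ∈ L) : Deriv ((conjList L).imp A) := by
  induction L with
  | nil => cases h
  | cons B L ih =>
    rcases List.mem_cons.mp h with rfl | h
    · exact d_and_left _ _
    · exact d_trans (d_and_right _ _) (ih h)

lemma conj_intro {X : Formula} {L : List Formula} (h : ∀ A ∈ L, Deriv (X.imp A)) :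
    Deriv (X.imp (conjList L)) := by
  induction L with
  | nil => exact d_imp_top X
  | cons B L ih =>
    exact d_and_intro (h B (by simp)) (ih fun A hA => h A (by simp [hA]))

/-! ### Derivability from a set -/

def DerivFrom (Γ : Set Formula) (A : Formula) : Prop :=
  ∃ L : List Formula, (∀ φ ∈ L, φ ∈ Γ) ∧ Deriv ((conjList L).imp A)

lemma df_mem {Γ : Set Formula} {A : Formula} (h : A ∈ Γ) : DerivFrom Γ A :=
  ⟨[A], by simpa using h, d_and_left _ _⟩

lemma df_deriv {Γ : Set Formula} {A : Formula} (h : Deriv A) : DerivFrom Γ A :=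
  ⟨[], by simp, d_k h⟩

lemma df_mono {Γ Γ' : Set Formula} {A : Formula} (hs : Γ ⊆ Γ') (h : DerivFrom Γ A) :
    DerivFrom Γ' A := by
  obtain ⟨L, hL, hd⟩ := h
  exact ⟨L, fun φ hφ => hs (hL φ hφ), hd⟩

lemma df_mp {Γ : Set Formula} {A B : Formula} (h1 : DerivFrom Γ (A.imp B))
    (h2 : DerivFrom Γ A) : DerivFrom Γ B := by
  obtain ⟨L1, hL1, hd1⟩ := h1
  obtain ⟨L2, hL2, hd2⟩ := h2
  refine ⟨L1 ++ L2, ?_, ?_⟩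
  · intro φ hφ; rcases List.mem_append.mp hφ with h | h
    · exact hL1 φ h
    · exact hL2 φ h
  · have p1 : Deriv ((conjList (L1 ++ L2)).imp (conjList L1)) :=
      conj_intro fun A hA => conj_mem (by simp [hA])
    have p2 : Deriv ((conjList (L1 ++ L2)).imp (conjList L2)) :=
      conj_intro fun A hA => conj_mem (by simp [hA])
    exact d_mp2 (d_trans p1 hd1) (d_trans p2 hd2)

lemma d_imp_falsum_of_neg' {A B : Formula} (h : Deriv A.neg) : Deriv (A.imp B) := by
  have t : Tautology (A.neg.imp (A.imp B)) := by
    intro v; simp only [Formula.imp, evalB]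
    cases evalB v A <;> cases evalB v B <;> rfl
  exact Deriv.mp (Deriv.taut t) h

lemma not_consistent_iff {Γ : Set Formula} :
    ¬ ConsistentSet Γ ↔ DerivFrom Γ falsum := by
  constructor
  · intro h
    simp only [ConsistentSet, not_forall, not_not] at h
    obtain ⟨L, hL, hd⟩ := h
    exact ⟨L, hL, d_imp_falsum_of_neg' hd⟩
  · rintro ⟨L, hL, hd⟩ hc
    exact hc L hL (d_neg_of_imp_falsum hd)

/-! ### deduction-style lemmas -/

lemma conj_filter_imp {A : Formula} (L : List Formula) :
    Deriv ((A.and (conjList (L.filter (· ≠ A)))).imp (conjList L)) := by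
  refine conj_intro ?_
  intro B hB
  by_cases hBA : B = A
  · subst hBA; exact d_and_left _ _
  · refine d_trans (d_and_right _ _) (conj_mem ?_)
    simp [List.mem_filter, hB, hBA]

lemma df_insert {Γ : Set Formula} {A B : Formula} (h : DerivFrom (insert A Γ) B) :
    DerivFrom Γ (A.imp B) := by
  obtain ⟨L, hL, hd⟩ := h
  refine ⟨L.filter (· ≠ A), ?_, ?_⟩
  · intro φ hφ
    have := List.mem_filter.mp hφ
    rcases hL φ this.1 with h | h
    · exact absurd (by simpa using this.2) (by simp_all)
    · exact h
  · refine d_curry (d_trans ?_ hd)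
    have t : Tautology (((conjList (L.filter (· ≠ A))).and A).imp
        (A.and (conjList (L.filter (· ≠ A))))) := by
      intro v; simp only [Formula.imp, evalB]
      cases evalB v A <;> cases evalB v (conjList (L.filter (· ≠ A))) <;> rfl
    exact d_trans (Deriv.taut t) (conj_filter_imp L)

lemma consistent_insert_of_not_df {Γ : Set Formula} {A : Formula}
    (h : ¬ DerivFrom Γ A.neg) : ConsistentSet (insert A Γ) := by
  by_contra hic
  have hAf : DerivFrom Γ (A.imp falsum) := df_insert (not_consistent_iff.mp hic)
  obtain ⟨L, hL, hd⟩ := hAf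
  have t : Tautology ((A.imp falsum).imp A.neg) := by
    intro v; simp only [Formula.imp, Formula.falsum, evalB]
    cases evalB v A <;> cases v (atom 0) <;> rfl
  exact h ⟨L, hL, d_trans hd (Deriv.taut t)⟩

/-! ### MCS facts -/

lemma mcs_mem_of_df {Γ : Set Formula} (hΓ : MCS Γ) {A : Formula}
    (h : DerivFrom Γ A) : A ∈ Γ := by
  have hcons : ConsistentSet (insert A Γ) := by
    intro L hL hd
    obtain ⟨L0, hL0, hd0⟩ := h
    have hX : Deriv ((conjList (L0 ++ L.filter (· ≠ A))).imp falsum) := by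
      have p1 : Deriv ((conjList (L0 ++ L.filter (· ≠ A))).imp (conjList L0)) :=
        conj_intro fun B hB => conj_mem (List.mem_append_left _ hB)
      have p2 : Deriv ((conjList (L0 ++ L.filter (· ≠ A))).imp (conjList (L.filter (· ≠ A)))) :=
        conj_intro fun B hB => conj_mem (List.mem_append_right _ hB)
      have pA : Deriv ((conjList (L0 ++ L.filter (· ≠ A))).imp A) := d_trans p1 hd0
      have pL : Deriv ((conjList (L0 ++ L.filter (· ≠ A))).imp (conjList L)) :=
        d_trans (d_and_intro pA p2) (conj_filter_imp L)
      exact d_trans pL (d_imp_falsum_of_neg hd)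
    refine hΓ.1 (L0 ++ L.filter (· ≠ A)) ?_ (d_neg_of_imp_falsum hX)
    intro φ hφ
    rcases List.mem_append.mp hφ with h' | h'
    · exact hL0 φ h'
    · have := List.mem_filter.mp h'
      rcases hL φ this.1 with h'' | h''
      · exact absurd (by simpa using this.2) (by simp_all)
      · exact h''
  have := hΓ.2 _ hcons (Set.subset_insert _ _)
  rw [← this]; exact Set.mem_insert _ _

lemma mcs_deriv_mem {Γ : Set Formula} (hΓ : MCS Γ) {A : Formula} (h : Deriv A) : A ∈ Γ :=
  mcs_mem_of_df hΓ (df_deriv h)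

lemma mcs_imp_closed {Γ : Set Formula} (hΓ : MCS Γ) {A B : Formula}
    (h : Deriv (A.imp B)) (hA : A ∈ Γ) : B ∈ Γ :=
  mcs_mem_of_df hΓ (df_mp (df_deriv h) (df_mem hA))

lemma mcs_mp {Γ : Set Formula} (hΓ : MCS Γ) {A B : Formula}
    (h : A.imp B ∈ Γ) (hA : A ∈ Γ) : B ∈ Γ :=
  mcs_mem_of_df hΓ (df_mp (df_mem h) (df_mem hA))

lemma mcs_not_both {Γ : Set Formula} (hc : ConsistentSet Γ) {A : Formula}
    (h1 : A ∈ Γ) (h2 : A.neg ∈ Γ) : False := by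
  refine hc [A, A.neg] (by simp [h1, h2]) ?_
  refine Deriv.taut ?_
  intro v; simp only [conjList, Formula.top, Formula.falsum, evalB]
  cases evalB v A <;> cases v (atom 0) <;> rfl

lemma mcs_neg_iff {Γ : Set Formula} (hΓ : MCS Γ) {A : Formula} :
    A.neg ∈ Γ ↔ A ∉ Γ := by
  constructor
  · intro h hA; exact mcs_not_both hΓ.1 hA h
  · intro h
    by_cases hdf : DerivFrom Γ A.neg
    · exact mcs_mem_of_df hΓ hdf
    · exfalso
      have hcons : ConsistentSet (insert A Γ) := consistent_insert_of_not_df hdf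
      have := hΓ.2 _ hcons (Set.subset_insert _ _)
      exact h (this ▸ Set.mem_insert _ _)

lemma mcs_em {Γ : Set Formula} (hΓ : MCS Γ) (A : Formula) : A ∈ Γ ∨ A.neg ∈ Γ := by
  by_cases h : A ∈ Γ
  · exact Or.inl h
  · exact Or.inr ((mcs_neg_iff hΓ).mpr h)

lemma mcs_and_iff {Γ : Set Formula} (hΓ : MCS Γ) {A B : Formula} :
    A.and B ∈ Γ ↔ A ∈ Γ ∧ B ∈ Γ := by
  constructor
  · intro h
    exact ⟨mcs_imp_closed hΓ (d_and_left A B) h, mcs_imp_closed hΓ (d_and_right A B) h⟩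
  · rintro ⟨h1, h2⟩
    exact mcs_mem_of_df hΓ (df_mp (df_mp (df_deriv (d_curry (d_id _))) (df_mem h1)) (df_mem h2))

end TL

namespace TL
open Formula

/-! ### Lindenbaum -/

lemma chain_finite_bound {c : Set (Set Formula)} (hchain : IsChain (· ⊆ ·) c)
    (hne : c.Nonempty) (L : List Formula) (hL : ∀ φ ∈ L, φ ∈ ⋃₀ c) :
    ∃ T ∈ c, ∀ φ ∈ L, φ ∈ T := by
  induction L with
  | nil => exact ⟨hne.choose, hne.choose_spec, by simp⟩
  | cons A L ih =>
    obtain ⟨T, hT, hTL⟩ := ih fun φ hφ => hL φ (by simp [hφ])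
    obtain ⟨T', hT', hAT'⟩ := hL A (by simp)
    rcases eq_or_ne T T' with rfl | hne'
    · refine ⟨T, hT, ?_⟩
      intro φ hφ
      rcases List.mem_cons.mp hφ with rfl | h
      exacts [hAT', hTL φ h]
    · rcases hchain hT hT' hne' with hsub | hsub
      · refine ⟨T', hT', ?_⟩
        intro φ hφ
        rcases List.mem_cons.mp hφ with rfl | h
        exacts [hAT', hsub (hTL φ h)]
      · refine ⟨T, hT, ?_⟩
        intro φ hφ
        rcases List.mem_cons.mp hφ with rfl | h
        exacts [hsub hAT', hTL φ h]

lemma lindenbaum {Γ0 : Set Formula} (h : ConsistentSet Γ0) :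
    ∃ Γ, MCS Γ ∧ Γ0 ⊆ Γ := by
  have hz := zorn_subset_nonempty {T : Set Formula | ConsistentSet T}
    (fun c hc hchain hne => by
      refine ⟨⋃₀ c, ?_, fun s hs => Set.subset_sUnion_of_mem hs⟩
      intro L hL hd
      obtain ⟨T, hTc, hTL⟩ := chain_finite_bound hchain hne L hL
      exact hc hTc L hTL hd) Γ0 h
  obtain ⟨Γ, hsub, hΓcons, hmax⟩ := hz
  refine ⟨Γ, ⟨hΓcons, fun Δ hΔ hsub' => (hmax hΔ hsub').antisymm hsub'⟩, hsub⟩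

/-! ### U and Khm facts in an MCS -/

lemma mem_U_of_deriv {Γ : Set Formula} (hΓ : MCS Γ) {A : Formula} (h : Deriv A) :
    Formula.U A ∈ Γ := mcs_deriv_mem hΓ (Deriv.necU h)

lemma mcs_U_mono {Γ : Set Formula} (hΓ : MCS Γ) {A B : Formula}
    (h : Deriv (A.imp B)) (hA : Formula.U A ∈ Γ) : Formula.U B ∈ Γ := by
  have h1 : Formula.U (A.imp B) ∈ Γ := mem_U_of_deriv hΓ h
  have h2 := Deriv.distU A B
  exact mcs_imp_closed hΓ h2 ((mcs_and_iff hΓ).mpr ⟨hA, h1⟩)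

lemma mcs_U_and {Γ : Set Formula} (hΓ : MCS Γ) {A B : Formula}
    (hA : Formula.U A ∈ Γ) (hB : Formula.U B ∈ Γ) : Formula.U (A.and B) ∈ Γ := by
  have h1 : Formula.U (B.imp (A.and B)) ∈ Γ := by
    refine mcs_U_mono hΓ ?_ hA
    refine Deriv.taut ?_
    intro v; simp only [Formula.imp, evalB]
    cases evalB v A <;> cases evalB v B <;> rfl
  exact mcs_imp_closed hΓ (Deriv.distU B (A.and B)) ((mcs_and_iff hΓ).mpr ⟨hB, h1⟩)

lemma mcs_tU {Γ : Set Formula} (hΓ : MCS Γ) {A : Formula} (h : Formula.U A ∈ Γ) : A ∈ Γ :=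
  mcs_imp_closed hΓ (Deriv.tU A) h

/-! ### Φ_Γ -/

lemma mem_phiGamma_self {Γ : Set Formula} (hΓ : MCS Γ) : Γ ∈ PhiGamma Γ := ⟨hΓ, rfl⟩

lemma phiGamma_mcs {Γ Δ : Set Formula} (h : Δ ∈ PhiGamma Γ) : MCS Δ := h.1

lemma khm_transfer {Γ Δ : Set Formula} (h : Δ ∈ PhiGamma Γ) (a b c : Formula) :
    (Formula.khm a b c ∈ Δ) ↔ (Formula.khm a b c ∈ Γ) := by
  have := h.2
  constructor
  · intro hm
    have : Formula.khm a b c ∈ khmPart Γ := by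
      rw [← h.2]; exact ⟨hm, a, b, c, rfl⟩
    exact this.1
  · intro hm
    have : Formula.khm a b c ∈ khmPart Δ := by
      rw [h.2]; exact ⟨hm, a, b, c, rfl⟩
    exact this.1

lemma U_transfer {Γ Δ : Set Formula} (hΓ : MCS Γ) (h : Δ ∈ PhiGamma Γ) (A : Formula) :
    (Formula.U A ∈ Δ) ↔ (Formula.U A ∈ Γ) := khm_transfer h _ _ _

/-- The Khm-literals of Γ. -/
def KhmLits (Γ : Set Formula) : Set Formula :=
  {θ | (∃ a b c, θ = Formula.khm a b c) ∧ θ ∈ Γ} ∪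
  {θ | ∃ a b c, θ = (Formula.khm a b c).neg ∧ Formula.khm a b c ∉ Γ}

lemma khmLits_mem {Γ : Set Formula} (hΓ : MCS Γ) {θ : Formula} (h : θ ∈ KhmLits Γ) :
    θ ∈ Γ ∧ Deriv (θ.imp (Formula.U θ)) := by
  rcases h with ⟨⟨a, b, c, rfl⟩, hmem⟩ | ⟨a, b, c, rfl, hnm⟩
  · exact ⟨hmem, Deriv.fourKhmU a b c⟩
  · exact ⟨(mcs_neg_iff hΓ).mpr hnm, Deriv.fiveKhmU a b c⟩

lemma mcs_U_conj {Γ : Set Formula} (hΓ : MCS Γ) {L : List Formula}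
    (h : ∀ φ ∈ L, Formula.U φ ∈ Γ) : Formula.U (conjList L) ∈ Γ := by
  induction L with
  | nil => exact mem_U_of_deriv hΓ d_top
  | cons A L ih =>
    exact mcs_U_and hΓ (h A (by simp)) (ih fun φ hφ => h φ (by simp [hφ]))

/-- Key existence lemma: if `U(¬θ) ∉ Γ`, there is `Δ ∈ Φ_Γ` with `θ ∈ Δ`. -/
lemma exists_phiGamma {Γ : Set Formula} (hΓ : MCS Γ) {θ : Formula}
    (h : Formula.U θ.neg ∉ Γ) : ∃ Δ ∈ PhiGamma Γ, θ ∈ Δ := by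
  have hcons : ConsistentSet (insert θ (KhmLits Γ)) := by
    refine consistent_insert_of_not_df ?_
    rintro ⟨L, hL, hd⟩
    have hUconj : Formula.U (conjList L) ∈ Γ := by
      refine mcs_U_conj hΓ ?_
      intro φ hφ
      have := khmLits_mem hΓ (hL φ hφ)
      exact mcs_imp_closed hΓ this.2 this.1
    exact h (mcs_U_mono hΓ hd hUconj)
  obtain ⟨Δ, hΔmcs, hsub⟩ := lindenbaum hcons
  refine ⟨Δ, ⟨hΔmcs, ?_⟩, hsub (Set.mem_insert _ _)⟩
  ext θ'
  constructor
  · rintro ⟨hmem, a, b, c, rfl⟩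
    refine ⟨?_, a, b, c, rfl⟩
    by_contra hn
    have : (Formula.khm a b c).neg ∈ Δ :=
      hsub (Set.mem_insert_of_mem _ (Or.inr ⟨a, b, c, rfl, hn⟩))
    exact mcs_not_both hΔmcs.1 hmem this
  · rintro ⟨hmem, a, b, c, rfl⟩
    exact ⟨hsub (Set.mem_insert_of_mem _ (Or.inl ⟨⟨a, b, c, rfl⟩, hmem⟩)), a, b, c, rfl⟩

/-- Covering lemma: if `ρ ∈ Δ` whenever `θ ∈ Δ ∈ Φ_Γ`, then `U(θ→ρ) ∈ Γ`. -/
lemma covering {Γ : Set Formula} (hΓ : MCS Γ) {θ ρ : Formula}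
    (h : ∀ Δ ∈ PhiGamma Γ, θ ∈ Δ → ρ ∈ Δ) : Formula.U (θ.imp ρ) ∈ Γ := by
  by_contra hn
  have : Formula.U (θ.and ρ.neg).neg ∉ Γ := hn
  obtain ⟨Δ, hΔ, hmem⟩ := exists_phiGamma hΓ this
  have hθ : θ ∈ Δ := ((mcs_and_iff hΔ.1).mp hmem).1
  have hρn : ρ.neg ∈ Δ := ((mcs_and_iff hΔ.1).mp hmem).2
  exact mcs_not_both hΔ.1.1 (h Δ hΔ hθ) hρn

lemma U_mem_phi {Γ Δ : Set Formula} (hΓ : MCS Γ) (hΔ : Δ ∈ PhiGamma Γ) {A : Formula}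
    (h : Formula.U A ∈ Γ) : A ∈ Δ :=
  mcs_tU hΔ.1 ((U_transfer hΓ hΔ A).mpr h)

end TL

namespace TL
open Formula

variable {Γ : Set Formula}

/-! ### misc Khm derived facts in an MCS -/

lemma kh_uKhm (hΓ : MCS Γ) {p' p o o' q q' : Formula}
    (h1 : Formula.U (p'.imp p) ∈ Γ) (h2 : Formula.U (o.imp o') ∈ Γ)
    (h3 : Formula.U (q.imp q') ∈ Γ) (h : Formula.khm p o q ∈ Γ) :
    Formula.khm p' o' q' ∈ Γ := by
  refine mcs_imp_closed hΓ (Deriv.uKhm p' p o o' q q') ?_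
  exact (mcs_and_iff hΓ).mpr ⟨(mcs_and_iff hΓ).mpr ⟨(mcs_and_iff hΓ).mpr ⟨h1, h2⟩, h3⟩, h⟩

lemma khD (hΓ : MCS Γ) {p' p o o' q q' : Formula}
    (h1 : Deriv (p'.imp p)) (h2 : Deriv (o.imp o')) (h3 : Deriv (q.imp q'))
    (h : Formula.khm p o q ∈ Γ) : Formula.khm p' o' q' ∈ Γ :=
  kh_uKhm hΓ (mem_U_of_deriv hΓ h1) (mem_U_of_deriv hΓ h2) (mem_U_of_deriv hΓ h3) h

lemma kh_empty (hΓ : MCS Γ) {A B : Formula} (h : Formula.U (A.imp B) ∈ Γ) :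
    Formula.khm A falsum B ∈ Γ :=
  mcs_imp_closed hΓ (Deriv.empKhm A B) h

lemma kh_self (hΓ : MCS Γ) (A : Formula) : Formula.khm A falsum A ∈ Γ :=
  kh_empty hΓ (mem_U_of_deriv hΓ (d_id A))

lemma kh_weaken_mid (hΓ : MCS Γ) {A B : Formula} (C : Formula)
    (h : Formula.khm A falsum B ∈ Γ) : Formula.khm A C B ∈ Γ :=
  khD hΓ (d_id A) (d_falsum_imp C) (d_id B) h

lemma kh_comp (hΓ : MCS Γ) {p o r q : Formula}
    (h1 : Formula.khm p o r ∈ Γ) (h2 : Formula.khm r o q ∈ Γ)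
    (h3 : Formula.U (r.imp o) ∈ Γ) : Formula.khm p o q ∈ Γ := by
  refine mcs_imp_closed hΓ (Deriv.compKhm p o r q) ?_
  exact (mcs_and_iff hΓ).mpr ⟨(mcs_and_iff hΓ).mpr ⟨h1, h2⟩, h3⟩

lemma kh_falsum_U (hΓ : MCS Γ) {A o : Formula} (h : Formula.khm A o falsum ∈ Γ) :
    Formula.U A.neg ∈ Γ :=
  khD hΓ d_dne (d_imp_top o) (d_id falsum) h

lemma d_neg_imp_falsum (A : Formula) : Deriv (A.neg.imp (A.imp falsum)) := by
  refine Deriv.taut ?_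
  intro v; simp only [Formula.imp, Formula.falsum, evalB]
  cases evalB v A <;> cases v (atom 0) <;> rfl

/-- if there is a `ψ0`-MCS in `Φ_Γ` and `Khm(ψ0,o,θ) ∈ Γ` then there is a `θ`-MCS in `Φ_Γ`. -/
lemma exists_of_kh (hΓ : MCS Γ) {ψ0 o θ : Formula}
    (hex : ∃ Δ ∈ PhiGamma Γ, ψ0 ∈ Δ) (h : Formula.khm ψ0 o θ ∈ Γ) :
    ∃ Δ ∈ PhiGamma Γ, θ ∈ Δ := by
  by_cases hU : Formula.U θ.neg ∈ Γ
  · exfalso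
    have h1 : Formula.U (θ.imp falsum) ∈ Γ := mcs_U_mono hΓ (d_neg_imp_falsum θ) hU
    have h2 : Formula.khm ψ0 o falsum ∈ Γ :=
      kh_uKhm hΓ (mem_U_of_deriv hΓ (d_id ψ0)) (mem_U_of_deriv hΓ (d_id o)) h1 h
    have h3 : Formula.U ψ0.neg ∈ Γ := kh_falsum_U hΓ h2
    obtain ⟨Δ, hΔ, hψ0⟩ := hex
    exact mcs_not_both hΔ.1.1 hψ0 (U_mem_phi hΓ hΔ h3)
  · exact exists_phiGamma hΓ hU

/-! ### canonical model basics -/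

lemma neg_neg_ne (A : Formula) : A.neg.neg ≠ A := by
  intro h
  have := congrArg sizeOf h
  simp [Formula.neg.sizeOf_spec] at this
  omega

lemma sigma_one_mem (h : Formula.khm ψ Formula.falsum φ ∈ Γ) :
    CanAct.one ψ φ ∈ SigmaGamma Γ := Or.inl ⟨ψ, φ, rfl, h⟩

lemma sigma_two_mem (h1 : Formula.khm ψ χ φ ∈ Γ)
    (h2 : (Formula.khm ψ Formula.falsum φ).neg ∈ Γ) :
    CanAct.two χ ψ φ ∈ SigmaGamma Γ := Or.inr ⟨χ, ψ, φ, rfl, h1, h2⟩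

lemma sigma_one_elim (h : CanAct.one ψ φ ∈ SigmaGamma Γ) :
    Formula.khm ψ Formula.falsum φ ∈ Γ := by
  rcases h with ⟨a, b, heq, hm⟩ | ⟨a, b, c, heq, _⟩
  · obtain ⟨rfl, rfl⟩ : ψ = a ∧ φ = b := by
      constructor <;> injection heq
    exact hm
  · exact absurd heq (by simp)

lemma sigma_two_elim (h : CanAct.two χ ψ φ ∈ SigmaGamma Γ) :
    Formula.khm ψ χ φ ∈ Γ ∧ (Formula.khm ψ Formula.falsum φ).neg ∈ Γ := by
  rcases h with ⟨a, b, heq, _⟩ | ⟨a, b, c, heq, hm⟩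
  · exact absurd heq (by simp)
  · obtain ⟨rfl, rfl, rfl⟩ : χ = a ∧ ψ = b ∧ φ = c := by
      refine ⟨?_, ?_, ?_⟩ <;> injection heq
    exact hm

/-- generic state with marker `(χ, χ)`. -/
def mkState (hΓ : MCS Γ) {Δ : Set Formula} (hΔ : Δ ∈ PhiGamma Γ) {χ : Formula}
    (hχ : χ ∈ Δ) : (canonicalModel Γ).S :=
  ⟨(Δ, (χ, χ)), hΔ, hχ, Or.inr (sigma_one_mem (kh_self hΓ χ))⟩

lemma R_one {ψ φ : Formula} (h : CanAct.one ψ φ ∈ SigmaGamma Γ)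
    (w w' : (canonicalModel Γ).S) :
    (canonicalModel Γ).R ⟨CanAct.one ψ φ, h⟩ w w' ↔ (ψ ∈ w.1.1 ∧ w'.1.2 = (φ, ψ)) :=
  Iff.rfl

lemma R_two {χ ψ φ : Formula} (h : CanAct.two χ ψ φ ∈ SigmaGamma Γ)
    (w w' : (canonicalModel Γ).S) :
    (canonicalModel Γ).R ⟨CanAct.two χ ψ φ, h⟩ w w' ↔ (w.1.2 = (χ, ψ) ∧ φ ∈ w'.1.1) :=
  Iff.rfl

lemma state_phi (w : (canonicalModel Γ).S) : w.1.1 ∈ PhiGamma Γ := w.2.1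

lemma state_mark_mem (w : (canonicalModel Γ).S) : w.1.2.1 ∈ w.1.1 := w.2.2.1

/-! ### backward direction of the khm case -/

lemma khm_backward (hΓ : MCS Γ) {ψ χ φ : Formula}
    (IHψ : ∀ w : (canonicalModel Γ).S, (canonicalModel Γ).sat ψ w ↔ ψ ∈ w.1.1)
    (IHχ : ∀ w : (canonicalModel Γ).S, (canonicalModel Γ).sat χ w ↔ χ ∈ w.1.1)
    (IHφ : ∀ w : (canonicalModel Γ).S, (canonicalModel Γ).sat φ w ↔ φ ∈ w.1.1)
    (hmem : Formula.khm ψ χ φ ∈ Γ) (w : (canonicalModel Γ).S) :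
    (canonicalModel Γ).sat (Formula.khm ψ χ φ) w := by
  show ∃ σ, _
  by_cases hfe : Formula.khm ψ Formula.falsum φ ∈ Γ
  · -- one action ⟨ψ,⊥,φ⟩
    refine ⟨[⟨CanAct.one ψ φ, sigma_one_mem hfe⟩], ?_⟩
    intro s' hs'
    have hψs' : ψ ∈ s'.1.1 := (IHψ s').mp hs'
    have hex : ∃ Δ ∈ PhiGamma Γ, ψ ∈ Δ := ⟨s'.1.1, state_phi s', hψs'⟩
    obtain ⟨Θ, hΘ, hφΘ⟩ := exists_of_kh hΓ hex hfe
    have hu : ((Θ, (φ, ψ)) : Set Formula × Formula × Formula) ∈ CanStates Γ :=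
      ⟨hΘ, hφΘ, Or.inr (sigma_one_mem hfe)⟩
    refine ⟨⟨?_, ?_⟩, ?_⟩
    · intro k hk t hbs
      have hk0 : k = 0 := by simp at hk; omega
      subst hk0
      have ht : t = s' := hbs.symm
      subst ht
      exact ⟨⟨(Θ, (φ, ψ)), hu⟩, hψs', rfl⟩
    · intro k hk0 hk1
      simp at hk1
      omega
    · rintro t ⟨u, hR, hbs⟩
      have ht : u = t := hbs
      subst ht
      have h2 : u.1.2.1 = φ := by rw [hR.2]
      exact (IHφ u).mpr (h2 ▸ state_mark_mem u)
  · -- two actions ⟨ψ,⊥,χ⟩ then ⟨χ^ψ,φ⟩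
    have hnfe : (Formula.khm ψ Formula.falsum φ).neg ∈ Γ := (mcs_neg_iff hΓ).mpr hfe
    have hone : Formula.khm ψ Formula.falsum χ ∈ Γ :=
      mcs_imp_closed hΓ (Deriv.oneKhm ψ χ φ) ((mcs_and_iff hΓ).mpr ⟨hmem, hnfe⟩)
    have ha2 : CanAct.two χ ψ φ ∈ SigmaGamma Γ := sigma_two_mem hmem hnfe
    refine ⟨[⟨CanAct.one ψ χ, sigma_one_mem hone⟩, ⟨CanAct.two χ ψ φ, ha2⟩], ?_⟩
    intro s' hs'
    have hψs' : ψ ∈ s'.1.1 := (IHψ s').mp hs'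
    have hex : ∃ Δ ∈ PhiGamma Γ, ψ ∈ Δ := ⟨s'.1.1, state_phi s', hψs'⟩
    obtain ⟨Θ1, hΘ1, hχΘ1⟩ := exists_of_kh hΓ hex hone
    obtain ⟨Θ2, hΘ2, hφΘ2⟩ := exists_of_kh hΓ hex hmem
    have hu1 : ((Θ1, (χ, ψ)) : Set Formula × Formula × Formula) ∈ CanStates Γ :=
      ⟨hΘ1, hχΘ1, Or.inl ⟨φ, ha2⟩⟩
    refine ⟨⟨?_, ?_⟩, ?_⟩
    · intro k hk t hbs
      have hk2 : k = 0 ∨ k = 1 := by simp at hk; omega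
      rcases hk2 with rfl | rfl
      · have ht : t = s' := hbs.symm
        subst ht
        exact ⟨⟨(Θ1, (χ, ψ)), hu1⟩, hψs', rfl⟩
      · obtain ⟨u, hR, hbs'⟩ := hbs
        have ht : u = t := hbs'
        subst ht
        exact ⟨mkState hΓ hΘ2 hφΘ2, hR.2, hφΘ2⟩
    · intro k hk0 hk1 t hbs
      have hk2 : k = 1 := by simp at hk1; omega
      subst hk2
      obtain ⟨u, hR, hbs'⟩ := hbs
      have ht : u = t := hbs'
      subst ht
      have h2 : u.1.2.1 = χ := by rw [hR.2]
      exact (IHχ u).mpr (h2 ▸ state_mark_mem u)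
    · rintro t ⟨u, hR1, v, hR2, hbs⟩
      have ht : v = t := hbs
      subst ht
      exact (IHφ v).mpr hR2.2

end TL

namespace TL
open Formula

variable {Γ : Set Formula}

/-- Suffix semantic condition for a set of intermediate states. -/
def SemCond (Γ : Set Formula) (χ φ : Formula)
    (ρ : List {a : CanAct // a ∈ SigmaGamma Γ}) (T : Set (canonicalModel Γ).S) : Prop :=
  (∀ t ∈ T, ∀ k, ∀ h : k < ρ.length, ∀ u, (canonicalModel Γ).bigStep (ρ.take k) t u →
      ∃ v, (canonicalModel Γ).R (ρ.get ⟨k, h⟩) u v) ∧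
  (∀ t ∈ T, ∀ k, 0 < k → k < ρ.length → ∀ u, (canonicalModel Γ).bigStep (ρ.take k) t u →
      (canonicalModel Γ).sat χ u) ∧
  (∀ t ∈ T, ∀ u, (canonicalModel Γ).bigStep ρ t u → (canonicalModel Γ).sat φ u)

/-- successors of a set of states. -/
def succSet (Γ : Set Formula) (a : {a : CanAct // a ∈ SigmaGamma Γ})
    (T : Set (canonicalModel Γ).S) : Set (canonicalModel Γ).S :=
  {u | ∃ t ∈ T, (canonicalModel Γ).R a t u}

lemma semCond_step {χ φ : Formula} {a : {a : CanAct // a ∈ SigmaGamma Γ}}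
    {ρ : List {a : CanAct // a ∈ SigmaGamma Γ}} {T : Set (canonicalModel Γ).S}
    (h : SemCond Γ χ φ (a :: ρ) T) : SemCond Γ χ φ ρ (succSet Γ a T) := by
  obtain ⟨hSE, hmid, hend⟩ := h
  refine ⟨?_, ?_, ?_⟩
  · rintro t' ⟨t, ht, hR⟩ k hk u hbs
    exact hSE t ht (k + 1) (Nat.succ_lt_succ hk) u ⟨t', hR, hbs⟩
  · rintro t' ⟨t, ht, hR⟩ k _ hk u hbs
    exact hmid t ht (k + 1) (Nat.succ_pos k) (Nat.succ_lt_succ hk) u ⟨t', hR, hbs⟩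
  · rintro t' ⟨t, ht, hR⟩ u hbs
    exact hend t ht u ⟨t', hR, hbs⟩

lemma semCond_mid_one {χ φ : Formula} {a : {a : CanAct // a ∈ SigmaGamma Γ}}
    {ρ : List {a : CanAct // a ∈ SigmaGamma Γ}} {T : Set (canonicalModel Γ).S}
    (h : SemCond Γ χ φ (a :: ρ) T) (hρ : ρ ≠ []) :
    ∀ u ∈ succSet Γ a T, (canonicalModel Γ).sat χ u := by
  rintro u ⟨t, ht, hR⟩
  refine h.2.1 t ht 1 one_pos ?_ u ⟨u, hR, rfl⟩
  have := List.length_pos_iff.mpr hρ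
  simp only [List.length_cons]
  omega

lemma cov_U (hΓ : MCS Γ) {α ρf : Formula} {T : Set (canonicalModel Γ).S}
    (hcov : ∀ Θ ∈ PhiGamma Γ, α ∈ Θ → ∃ w, w ∈ T ∧ w.1.1 = Θ)
    (hall : ∀ w ∈ T, ρf ∈ w.1.1) : Formula.U (α.imp ρf) ∈ Γ := by
  refine covering hΓ ?_
  intro Δ hΔ hα
  obtain ⟨w, hw, hwΘ⟩ := hcov Δ hΔ hα
  exact hwΘ ▸ hall w hw

lemma shape_cov_full (hΓ : MCS Γ) {α : Formula} :
    ∀ Θ ∈ PhiGamma Γ, α ∈ Θ →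
      ∃ w : (canonicalModel Γ).S, w ∈ {w : (canonicalModel Γ).S | α ∈ w.1.1} ∧ w.1.1 = Θ :=
  fun Θ hΘ hα => ⟨mkState hΓ hΘ hα, hα, rfl⟩

lemma shape_cov_fixed (hΓ : MCS Γ) {α μ : Formula}
    (hne : ({w : (canonicalModel Γ).S | w.1.2 = (α, μ)}).Nonempty) :
    ∀ Θ ∈ PhiGamma Γ, α ∈ Θ →
      ∃ w : (canonicalModel Γ).S, w ∈ {w : (canonicalModel Γ).S | w.1.2 = (α, μ)} ∧ w.1.1 = Θ := by
  obtain ⟨w0, hw0⟩ := hne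
  have hc := w0.2.2.2
  have h1 : w0.1.2.1 = α := by rw [hw0]
  have h2 : w0.1.2.2 = μ := by rw [hw0]
  rw [h1, h2] at hc
  intro Θ hΘ hα
  exact ⟨⟨(Θ, (α, μ)), hΘ, hα, hc⟩, rfl, rfl⟩

/-- The key forward induction. -/
lemma fwd (hΓ : MCS Γ) {ψ χ φ : Formula}
    (IHχ : ∀ w : (canonicalModel Γ).S, (canonicalModel Γ).sat χ w ↔ χ ∈ w.1.1)
    (IHφ : ∀ w : (canonicalModel Γ).S, (canonicalModel Γ).sat φ w ↔ φ ∈ w.1.1) :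
    ∀ (ρ : List {a : CanAct // a ∈ SigmaGamma Γ}) (α : Formula)
      (T : Set (canonicalModel Γ).S),
      (α = ψ ∨ (Formula.khm ψ χ α ∈ Γ ∧ (ρ ≠ [] → Formula.U (α.imp χ) ∈ Γ))) →
      (T = {w : (canonicalModel Γ).S | α ∈ w.1.1} ∨
        ∃ μ, T = {w : (canonicalModel Γ).S | w.1.2 = (α, μ)} ∧
          (ρ ≠ [] → ∀ γ, Formula.khm μ α γ ∈ Γ → Formula.khm ψ χ γ ∈ Γ)) →
      T.Nonempty → SemCond Γ χ φ ρ T → Formula.khm ψ χ φ ∈ Γ := by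
  intro ρ
  induction ρ with
  | nil =>
    intro α T hchain hshape hne hsem
    have hall : ∀ w ∈ T, φ ∈ w.1.1 := fun w hw => (IHφ w).mp (hsem.2.2 w hw w rfl)
    have hcov : ∀ Θ ∈ PhiGamma Γ, α ∈ Θ → ∃ w, w ∈ T ∧ w.1.1 = Θ := by
      rcases hshape with rfl | ⟨μ, rfl, _⟩
      · exact shape_cov_full hΓ
      · exact shape_cov_fixed hΓ hne
    have hU : Formula.U (α.imp φ) ∈ Γ := cov_U hΓ hcov hall
    rcases hchain with rfl | ⟨hk, _⟩
    · exact kh_weaken_mid hΓ χ (kh_empty hΓ hU)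
    · exact kh_uKhm hΓ (mem_U_of_deriv hΓ (d_id ψ)) (mem_U_of_deriv hΓ (d_id χ)) hU hk
  | cons a ρ ih =>
    intro α T hchain hshape hne hsem
    have hSE0 : ∀ t ∈ T, ∃ v, (canonicalModel Γ).R a t v :=
      fun t ht => hsem.1 t ht 0 (Nat.succ_pos _) t rfl
    have hcovT : ∀ Θ ∈ PhiGamma Γ, α ∈ Θ → ∃ w, w ∈ T ∧ w.1.1 = Θ := by
      rcases hshape with hT | ⟨μ, hT, _⟩
      · exact hT ▸ shape_cov_full hΓ
      · exact hT ▸ shape_cov_fixed hΓ (hT ▸ hne)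
    have hchainuse : ∀ γ, Formula.khm α χ γ ∈ Γ → Formula.khm ψ χ γ ∈ Γ := by
      rcases hchain with rfl | ⟨hk, hUmid⟩
      · exact fun γ h => h
      · exact fun γ hγ => kh_comp hΓ hk hγ (hUmid (List.cons_ne_nil a ρ))
    obtain ⟨a0, ha⟩ := a
    cases a0 with
    | one ψ₁ φ₁ =>
      have hκ1 : Formula.khm ψ₁ Formula.falsum φ₁ ∈ Γ := sigma_one_elim ha
      have henab : ∀ t ∈ T, ψ₁ ∈ t.1.1 := by
        intro t ht
        obtain ⟨v, hR⟩ := hSE0 t ht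
        exact hR.1
      have hUαψ₁ : Formula.U (α.imp ψ₁) ∈ Γ := cov_U hΓ hcovT henab
      have hκα : Formula.khm α χ φ₁ ∈ Γ :=
        kh_uKhm hΓ hUαψ₁ (mem_U_of_deriv hΓ (d_falsum_imp χ)) (mem_U_of_deriv hΓ (d_id φ₁)) hκ1
      have hκψ1 : Formula.khm ψ χ φ₁ ∈ Γ := hchainuse φ₁ hκα
      have hsucc : succSet Γ ⟨CanAct.one ψ₁ φ₁, ha⟩ T
          = {u : (canonicalModel Γ).S | u.1.2 = (φ₁, ψ₁)} := by
        ext u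
        constructor
        · rintro ⟨t, ht, hR⟩
          exact hR.2
        · intro hu
          obtain ⟨t, ht⟩ := hne
          exact ⟨t, ht, henab t ht, hu⟩
      have hne' : ({u : (canonicalModel Γ).S | u.1.2 = (φ₁, ψ₁)}).Nonempty := by
        obtain ⟨t, ht⟩ := hne
        obtain ⟨v, hR⟩ := hSE0 t ht
        exact ⟨v, hR.2⟩
      have hsem' : SemCond Γ χ φ ρ {u : (canonicalModel Γ).S | u.1.2 = (φ₁, ψ₁)} := by
        rw [← hsucc]; exact semCond_step hsem
      have hmidT' : ρ ≠ [] → ∀ u : (canonicalModel Γ).S, u.1.2 = (φ₁, ψ₁) → χ ∈ u.1.1 := by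
        intro hρ u hu
        exact (IHχ u).mp (semCond_mid_one hsem hρ u (hsucc ▸ hu))
      have hUφ₁χ : ρ ≠ [] → Formula.U (φ₁.imp χ) ∈ Γ := by
        intro hρ
        exact cov_U hΓ (shape_cov_fixed hΓ hne') (fun w hw => hmidT' hρ w hw)
      refine ih φ₁ _ (Or.inr ⟨hκψ1, hUφ₁χ⟩) (Or.inr ⟨ψ₁, rfl, ?_⟩) hne' hsem'
      intro hρ γ hγ
      exact hchainuse γ (kh_uKhm hΓ hUαψ₁ (hUφ₁χ hρ) (mem_U_of_deriv hΓ (d_id γ)) hγ)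
    | two χ₁ ψ₁ φ₁ =>
      obtain ⟨hκ2, hnκ⟩ := sigma_two_elim ha
      have hmark : ∀ t ∈ T, t.1.2 = (χ₁, ψ₁) := by
        intro t ht
        obtain ⟨v, hR⟩ := hSE0 t ht
        exact hR.1
      rcases hshape with hT | ⟨μ, hT, hdat⟩
      · exfalso
        obtain ⟨t₀, ht₀⟩ := hne
        have hα : α ∈ t₀.1.1 := by rw [hT] at ht₀; exact ht₀
        have hα2 : α.neg.neg ∈ t₀.1.1 := mcs_imp_closed (state_phi t₀).1 d_dni hα
        have hw1 : (mkState hΓ (state_phi t₀) hα) ∈ T := by rw [hT]; exact hα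
        have hw2 : (mkState hΓ (state_phi t₀) hα2) ∈ T := by rw [hT]; exact hα
        have e1 := hmark _ hw1
        have e2 := hmark _ hw2
        have q1 : α = χ₁ := congrArg Prod.fst e1
        have q2 : α.neg.neg = χ₁ := congrArg Prod.fst e2
        exact neg_neg_ne α (q2.trans q1.symm)
      · obtain ⟨t₀, ht₀⟩ := hne
        have hmk : ((α, μ) : Formula × Formula) = (χ₁, ψ₁) := by
          have h1 : t₀.1.2 = (α, μ) := by rw [hT] at ht₀; exact ht₀
          rw [← h1]; exact hmark t₀ ht₀
        have q1 : α = χ₁ := congrArg Prod.fst hmk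
        have q2 : μ = ψ₁ := congrArg Prod.snd hmk
        subst q1
        subst q2
        have hκψ1 : Formula.khm ψ χ φ₁ ∈ Γ := hdat (List.cons_ne_nil _ _) φ₁ hκ2
        have hsucc : succSet Γ ⟨CanAct.two α μ φ₁, ha⟩ T
            = {u : (canonicalModel Γ).S | φ₁ ∈ u.1.1} := by
          ext u
          constructor
          · rintro ⟨t, ht, hR⟩
            exact hR.2
          · intro hu
            exact ⟨t₀, ht₀, hmark t₀ ht₀, hu⟩
        have hne' : ({u : (canonicalModel Γ).S | φ₁ ∈ u.1.1}).Nonempty := by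
          obtain ⟨v, hR⟩ := hSE0 t₀ ht₀
          exact ⟨v, hR.2⟩
        have hsem' : SemCond Γ χ φ ρ {u : (canonicalModel Γ).S | φ₁ ∈ u.1.1} := by
          rw [← hsucc]; exact semCond_step hsem
        have hUφ₁χ : ρ ≠ [] → Formula.U (φ₁.imp χ) ∈ Γ := by
          intro hρ
          refine cov_U hΓ (shape_cov_full hΓ) ?_
          intro u hu
          exact (IHχ u).mp (semCond_mid_one hsem hρ u (hsucc ▸ hu))
        exact ih φ₁ _ (Or.inr ⟨hκψ1, hUφ₁χ⟩) (Or.inl rfl) hne' hsem'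

lemma khm_forward (hΓ : MCS Γ) {ψ χ φ : Formula}
    (IHψ : ∀ w : (canonicalModel Γ).S, (canonicalModel Γ).sat ψ w ↔ ψ ∈ w.1.1)
    (IHχ : ∀ w : (canonicalModel Γ).S, (canonicalModel Γ).sat χ w ↔ χ ∈ w.1.1)
    (IHφ : ∀ w : (canonicalModel Γ).S, (canonicalModel Γ).sat φ w ↔ φ ∈ w.1.1)
    (w : (canonicalModel Γ).S) (hsat : (canonicalModel Γ).sat (Formula.khm ψ χ φ) w) :
    Formula.khm ψ χ φ ∈ w.1.1 := by
  suffices h : Formula.khm ψ χ φ ∈ Γ from (khm_transfer (state_phi w) ψ χ φ).mpr h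
  obtain ⟨σ, hσ⟩ := hsat
  by_cases hUψ : Formula.U ψ.neg ∈ Γ
  · have hUimp : Formula.U (ψ.imp φ) ∈ Γ := mcs_U_mono hΓ d_neg_imp hUψ
    exact kh_weaken_mid hΓ χ (kh_empty hΓ hUimp)
  · obtain ⟨Δψ, hΔψ, hψΔ⟩ := exists_phiGamma hΓ hUψ
    refine fwd hΓ IHχ IHφ σ ψ {w : (canonicalModel Γ).S | ψ ∈ w.1.1} (Or.inl rfl)
      (Or.inl rfl) ⟨mkState hΓ hΔψ hψΔ, hψΔ⟩ ⟨?_, ?_, ?_⟩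
    · intro t ht k hk u hbs
      exact (hσ t ((IHψ t).mpr ht)).1.1 k hk u hbs
    · intro t ht k hk0 hk u hbs
      exact (hσ t ((IHψ t).mpr ht)).1.2 k hk0 hk u hbs
    · intro t ht u hbs
      exact (hσ t ((IHψ t).mpr ht)).2 u hbs

end TL

open TL in
theorem truth_lemma_aux (Γ : Set Formula) (hΓ : MCS Γ) (φ : Formula)
    (w : (canonicalModel Γ).S) :
    (canonicalModel Γ).sat φ w ↔ φ ∈ w.1.1 := by
  induction φ generalizing w with
  | atom n => exact Iff.rfl
  | neg A ihA =>
    have hm : MCS w.1.1 := (state_phi w).1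
    show (¬ (canonicalModel Γ).sat A w) ↔ _
    rw [ihA w]
    exact (mcs_neg_iff hm).symm
  | and A B ihA ihB =>
    have hm : MCS w.1.1 := (state_phi w).1
    show ((canonicalModel Γ).sat A w ∧ (canonicalModel Γ).sat B w) ↔ _
    rw [ihA w, ihB w]
    exact (mcs_and_iff hm).symm
  | khm ψ χ φ ihψ ihχ ihφ =>
    constructor
    · exact khm_forward hΓ ihψ ihχ ihφ w
    · intro hmem
      exact khm_backward hΓ ihψ ihχ ihφ ((khm_transfer (state_phi w) ψ χ φ).mp hmem) w

/-- Truth Lemma: for an MCS `Γ`, every formula `φ`, and every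
state `w` of the canonical model: `M^c_Γ, w ⊨ φ` iff `φ ∈ L(w)`. -/
theorem truth_lemma (Γ : Set Formula) (hΓ : MCS Γ) (φ : Formula)
    (w : (canonicalModel Γ).S) :
    (canonicalModel Γ).sat φ w ↔ φ ∈ w.1.1 :=
  truth_lemma_aux Γ hΓ φ w
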